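/- Tan points give non-NV points: Under the coupling of MAW E and SRW R, assume that for all k < l < n we have |D(k,l)_2| < C log n · √(D(k,l)_1 + 1) where D(k,l) = (E(l)-R(l)) - (E(k)-R(k)). If m < n is a tan point of R (i.e., event E_3(m,n) holds: R avoids R(m)+(-1,0) on [m-n^ε, m] and avoids the funnel R(m)+F on [0, m-n^ε]), then for n sufficiently large at least one of the times in [m - n^ε, m] is a non-NV point of E (a time at which the left neighbor of E's current position was never previously visited by E). -/
import Mathlib


open Filter

/-- The four unit steps on ℤ². -/
def dirs : Set (ℤ × ℤ) := {(1, 0), (-1, 0), (0, 1), (0, -1)}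

/-- Time `l` is a *non-NV time* of the trajectory `E`: the left neighbour of the current
position `E l` has never been visited before. -/
def nonNV (E : ℕ → ℤ × ℤ) (l : ℕ) : Prop :=
  ∀ s ≤ l, E s ≠ E l + (-1, 0)

/-- The "tanning funnel" `F = {(x,y) : x ≥ -1, |y| ≤ log³n · √(x+2)}`. -/
def tanFunnel (n : ℕ) : Set (ℤ × ℤ) :=
  {p | (-1 : ℤ) ≤ p.1 ∧ |(p.2 : ℝ)| ≤ (Real.log n) ^ 3 * Real.sqrt ((p.1 : ℝ) + 2)}

/-- `m` is a *tan point* of the trajectory `R` (with parameters `ε, n`): `R` avoids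
`R(m) + (-1,0)` on the time interval `[m - ⌈n^ε⌉, m]` and avoids the shifted funnel
`R(m) + F` on `[0, m - ⌈n^ε⌉]`. -/
def IsTanPoint (R : ℕ → ℤ × ℤ) (ε : ℝ) (n m : ℕ) : Prop :=
  (∀ l, m - ⌈(n : ℝ) ^ ε⌉₊ ≤ l → l ≤ m → R l ≠ R m + (-1, 0)) ∧
  (∀ l ≤ m - ⌈(n : ℝ) ^ ε⌉₊, R l - R m ∉ tanFunnel n)

/-- **Lemma 5.8 (tan points give non-NV points):** for coupled trajectories `E` (MAW)
and `R` (SRW) which take identical steps at NV times, whose difference has nondecreasing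
first coordinate, and which satisfy the drift bound
`|D(k,l)₂| < C log n · √(D(k,l)₁ + 1)` for all `k < l < n`, every tan point `m < n`
of `R` yields a non-NV time of `E` in `[m - ⌈n^ε⌉, m]`, provided `n` is large enough. -/
theorem tan_point_gives_nonNV
    (ε C : ℝ) (hε : 0 < ε) (hε' : ε < 1 / 2) (hC : 0 < C) :
    ∃ N : ℕ, ∀ n ≥ N, ∀ E R : ℕ → ℤ × ℤ,
      (∀ t, E (t + 1) - E t ∈ dirs ∧ R (t + 1) - R t ∈ dirs) →
      (∀ t, ¬ nonNV E t → E (t + 1) - E t = R (t + 1) - R t) →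
      (∀ k l : ℕ, k ≤ l → (E k - R k).1 ≤ (E l - R l).1) →
      (∀ k l : ℕ, k < l → l < n →
        |((((E l - R l) - (E k - R k)).2 : ℤ) : ℝ)|
          < C * Real.log n *
            Real.sqrt (((((E l - R l) - (E k - R k)).1 : ℤ) : ℝ) + 1)) →
      ∀ m : ℕ, m < n → IsTanPoint R ε n m →
        ∃ l : ℕ, m - ⌈(n : ℝ) ^ ε⌉₊ ≤ l ∧ l ≤ m ∧ nonNV E l := by

  refine ⟨⌈Real.exp (C + 1)⌉₊ + 1, fun n hn E R hsteps hcoup hmono hdrift m hmn htan => ?_⟩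
  by_contra hcon
  push_neg at hcon
  set m' := m - ⌈(n : ℝ) ^ ε⌉₊ with hm'def
  have hm'le : m' ≤ m := Nat.sub_le _ _
  -- log n is large
  have hnpos : (0 : ℝ) < n := by
    have h1 : (⌈Real.exp (C + 1)⌉₊ + 1 : ℝ) ≤ n := by exact_mod_cast Nat.cast_le.mpr hn
    have h2 : (0:ℝ) ≤ (⌈Real.exp (C + 1)⌉₊ : ℝ) := Nat.cast_nonneg _
    linarith
  have hexp : Real.exp (C + 1) ≤ n := by
    have h1 : Real.exp (C + 1) ≤ (⌈Real.exp (C + 1)⌉₊ : ℝ) := Nat.le_ceil _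
    have h2 : (⌈Real.exp (C + 1)⌉₊ + 1 : ℝ) ≤ n := by exact_mod_cast Nat.cast_le.mpr hn
    linarith
  have hlog : C + 1 ≤ Real.log n := by
    rw [Real.le_log_iff_exp_le hnpos]; exact hexp
  have hcube : C * Real.log n ≤ (Real.log n) ^ 3 := by
    have hL1 : (1 : ℝ) ≤ Real.log n := by linarith
    calc C * Real.log n ≤ Real.log n * Real.log n := by nlinarith
      _ ≤ Real.log n * Real.log n * Real.log n := by nlinarith
      _ = (Real.log n) ^ 3 := by ring
  -- the difference D is constant on [m', m]
  have hconst : ∀ l, m' ≤ l → l ≤ m → E l - R l = E m' - R m' := by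
    intro l hl
    induction l, hl using Nat.le_induction with
    | base => intro _; rfl
    | succ l hl ih =>
      intro hl1
      have hlm : l ≤ m := le_of_lt (Nat.lt_of_succ_le hl1)
      have h2 := hcoup l (hcon l hl hlm)
      have : E (l + 1) - R (l + 1) = E l - R l := by linear_combination h2
      rw [this, ih hlm]
  -- m itself is not nonNV, so E visited the left neighbour of E m at some s ≤ m
  have hnm : ¬ nonNV E m := hcon m hm'le le_rfl
  rw [nonNV] at hnm
  push_neg at hnm
  obtain ⟨s, hsm, hEs⟩ := hnm
  by_cases hs : m' ≤ s
  · -- s in [m', m] : R s = R m + (-1, 0), contradicting tan property 1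
    have h1 : E s - R s = E m - R m := by
      rw [hconst s hs hsm, hconst m hm'le le_rfl]
    have : R s = R m + (-1, 0) := by linear_combination hEs - h1
    exact htan.1 s hs hsm this
  · -- s < m' : R s - R m lies in the funnel, contradicting tan property 2
    push_neg at hs
    have hsm' : s < m := lt_of_lt_of_le hs hm'le
    have hΔ2 := hdrift s m hsm' hmn
    have hΔ1 : (E s - R s).1 ≤ (E m - R m).1 := hmono s m (le_of_lt hsm')
    refine htan.2 s (le_of_lt hs) ?_
    have hRs : R s - R m = (-1, 0) + ((E m - R m) - (E s - R s)) := by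
      linear_combination hEs
    constructor
    · show (-1 : ℤ) ≤ (R s - R m).1
      rw [hRs]
      simp only [Prod.fst_add, Prod.fst_sub] at hΔ1 ⊢
      omega
    · show |((R s - R m).2 : ℝ)| ≤ (Real.log n) ^ 3 * Real.sqrt (((R s - R m).1 : ℝ) + 2)
      have e2 : (R s - R m).2 = ((E m - R m) - (E s - R s)).2 := by
        rw [hRs]; simp
      have e1 : ((R s - R m).1 : ℝ) + 2 = (((E m - R m) - (E s - R s)).1 : ℝ) + 1 := by
        rw [hRs]; push_cast [Prod.fst_add, Prod.fst_sub]; ring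
      rw [e2, e1]
      refine le_trans (le_of_lt hΔ2) ?_
      exact mul_le_mul_of_nonneg_right hcube (Real.sqrt_nonneg _)
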